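/- If β > 0 and V_β ≠ ∅, then the regularized projection depth D_β(·; P_X) is (1/β)-Lipschitz continuous on H: |D_β(x;P_X) − D_β(y;P_X)| ≤ (1/β)‖x − y‖ for all x, y ∈ H. Consequently every upper level set {x : D_β(x;P_X) ≥ τ} is closed. -/

import Mathlib

open MeasureTheory Filter
open scoped RealInnerProductSpace ENNReal

noncomputable section

/-- The set of medians of a real random variable `Z`. -/
def medianSet {Ω : Type*} [MeasureSpace Ω] (Z : Ω → ℝ) : Set ℝ :=
  {m : ℝ | volume {ω | Z ω ≤ m} ≥ 1/2 ∧ volume {ω | m ≤ Z ω} ≥ 1/2}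

/-- The median (midpoint-of-medians convention) of a real random variable. -/
def med {Ω : Type*} [MeasureSpace Ω] (Z : Ω → ℝ) : ℝ :=
  (sInf (medianSet Z) + sSup (medianSet Z)) / 2

/-- The median absolute deviation of a real random variable. -/
def mad {Ω : Type*} [MeasureSpace Ω] (Z : Ω → ℝ) : ℝ :=
  med (fun ω => |Z ω - med Z|)

/-- The regularized direction set `V_β`. -/
def dirSet {Ω : Type*} [MeasureSpace Ω] {H : Type*} [NormedAddCommGroup H]
    [InnerProductSpace ℝ H] (X : Ω → H) (β : ℝ) : Set H :=
  {v : H | ‖v‖ = 1 ∧ β ≤ mad (fun ω => ⟪X ω, v⟫)}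

/-- The projection outlyingness `O_v(x; P_X)`. -/
def outl {Ω : Type*} [MeasureSpace Ω] {H : Type*} [NormedAddCommGroup H]
    [InnerProductSpace ℝ H] (X : Ω → H) (v x : H) : ℝ :=
  |⟪x, v⟫ - med (fun ω => ⟪X ω, v⟫)| / mad (fun ω => ⟪X ω, v⟫)

/-- The regularized projection depth `D_β(x; P_X)`. -/
def RPD {Ω : Type*} [MeasureSpace Ω] {H : Type*} [NormedAddCommGroup H]
    [InnerProductSpace ℝ H] (X : Ω → H) (β : ℝ) (x : H) : ℝ :=
  ⨅ v : dirSet X β, (1 + outl X v x)⁻¹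

end

open scoped NNReal

/-!
Each map `x ↦ (1 + O_v(x))⁻¹` with `v ∈ V_β` is `(1/β)`-Lipschitz: `O_v` is, because `‖v‖ = 1`
and `MAD[⟨X, v⟩] ≥ β`, and `t ↦ (1 + t)⁻¹` is `1`-Lipschitz on `[0, ∞)`. The depth is the
infimum of this family, and an infimum of a nonempty, pointwise bounded below family of
`K`-Lipschitz functions is `K`-Lipschitz. Upper level sets of a continuous function are closed.
-/

lemma LipschitzWith.inv_one_add {α : Type*} [PseudoMetricSpace α] {K : ℝ≥0} {f : α → ℝ}
    (hf : LipschitzWith K f) (hf0 : ∀ x, 0 ≤ f x) :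
    LipschitzWith K fun x => (1 + f x)⁻¹ := by
  refine LipschitzWith.of_dist_le_mul fun x y => ?_
  have hone : ∀ z, 1 ≤ ‖1 + f z‖ := fun z =>
    (le_add_of_nonneg_right (hf0 z)).trans (Real.le_norm_self _)
  have hne : ∀ z, 1 + f z ≠ 0 := fun z => norm_pos_iff.mp (one_pos.trans_le (hone z))
  rw [dist_inv_inv₀ (hne x) (hne y)]
  calc dist (1 + f x) (1 + f y) / (‖1 + f x‖ * ‖1 + f y‖)
      ≤ dist (1 + f x) (1 + f y) :=
        div_le_self dist_nonneg (one_le_mul_of_one_le_of_one_le (hone x) (hone y))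
    _ = dist (f x) (f y) := dist_add_left _ _ _
    _ ≤ K * dist x y := hf.dist_le_mul x y

lemma LipschitzWith.ciInf {α ι : Type*} [PseudoMetricSpace α] [Nonempty ι] {K : ℝ≥0}
    {f : ι → α → ℝ} (hf : ∀ i, LipschitzWith K (f i))
    (hbdd : ∀ x, BddBelow (Set.range fun i => f i x)) :
    LipschitzWith K fun x => ⨅ i, f i x := by
  refine LipschitzWith.of_le_add_mul K fun x y => ?_
  rw [← sub_le_iff_le_add]
  refine le_ciInf fun i => sub_le_iff_le_add.mpr ?_
  calc ⨅ i, f i x ≤ f i x := ciInf_le (hbdd x) i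
    _ ≤ f i y + K * dist x y := (hf i).le_add_mul x y

section

variable {Ω : Type*} [MeasureSpace Ω] {H : Type*} [NormedAddCommGroup H] [InnerProductSpace ℝ H]
  {X : Ω → H} {β : ℝ} {v : H}

lemma outl_nonneg (hβ : 0 ≤ β) (hv : v ∈ dirSet X β) (x : H) : 0 ≤ outl X v x :=
  div_nonneg (abs_nonneg _) (hβ.trans hv.2)

lemma lipschitzWith_outl (hβ : 0 < β) (hv : v ∈ dirSet X β) :
    LipschitzWith (Real.toNNReal (1 / β)) (outl X v) := by
  refine LipschitzWith.of_dist_le' fun x y => ?_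
  set c := med fun ω => ⟪X ω, v⟫
  set m := mad fun ω => ⟪X ω, v⟫
  have hm : β ≤ m := hv.2
  have hproj : |⟪x, v⟫ - ⟪y, v⟫| ≤ ‖x - y‖ := by
    simpa [← inner_sub_left, hv.1] using abs_real_inner_le_norm (x - y) v
  calc dist (outl X v x) (outl X v y) = |(|⟪x, v⟫ - c| - |⟪y, v⟫ - c|)| / m := by
        rw [Real.dist_eq, outl, outl, ← sub_div, abs_div, abs_of_pos (hβ.trans_le hm)]
    _ ≤ |⟪x, v⟫ - ⟪y, v⟫| / m := by
        refine div_le_div_of_nonneg_right ?_ (hβ.le.trans hm)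
        simpa using abs_abs_sub_abs_le_abs_sub (⟪x, v⟫ - c) (⟪y, v⟫ - c)
    _ ≤ ‖x - y‖ / β := div_le_div₀ (norm_nonneg _) hproj hβ hm
    _ = 1 / β * dist x y := by rw [dist_eq_norm, one_div_mul_eq_div]

lemma lipschitzWith_RPD (hβ : 0 < β) (hne : (dirSet X β).Nonempty) :
    LipschitzWith (Real.toNNReal (1 / β)) (RPD X β) := by
  have : Nonempty (dirSet X β) := hne.to_subtype
  refine LipschitzWith.ciInf
    (fun v => (lipschitzWith_outl hβ v.2).inv_one_add (outl_nonneg hβ.le v.2)) fun x => ⟨0, ?_⟩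
  rintro _ ⟨v, rfl⟩
  have := outl_nonneg hβ.le v.2 x
  positivity

end

theorem rpd_lipschitz_general
    {Ω : Type*} [MeasureSpace Ω]
    {H : Type*} [NormedAddCommGroup H] [InnerProductSpace ℝ H]
    (X : Ω → H) (β : ℝ) (hβ : 0 < β) (hne : (dirSet X β).Nonempty) :
    (∀ x y : H, |RPD X β x - RPD X β y| ≤ (1 / β) * ‖x - y‖) ∧
      ∀ τ : ℝ, IsClosed {x : H | τ ≤ RPD X β x} := by
  have hlip := lipschitzWith_RPD hβ hne
  refine ⟨fun x y => ?_, fun τ => isClosed_le continuous_const hlip.continuous⟩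
  have := hlip.dist_le_mul x y
  rwa [Real.dist_eq, dist_eq_norm, Real.coe_toNNReal _ (one_div_pos.mpr hβ).le] at this

/-- If `β > 0` and `V_β ≠ ∅`, then `D_β(·;P_X)` is `(1/β)`-Lipschitz on `H`, and consequently
every upper level set `{x : D_β(x;P_X) ≥ τ}` is closed. -/
theorem rpd_lipschitz
    {Ω : Type*} [MeasureSpace Ω] [IsProbabilityMeasure (volume : Measure Ω)]
    {H : Type*} [NormedAddCommGroup H] [InnerProductSpace ℝ H]
    (X : Ω → H) (β : ℝ) (hβ : 0 < β) (hne : (dirSet X β).Nonempty) :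
    (∀ x y : H, |RPD X β x - RPD X β y| ≤ (1 / β) * ‖x - y‖) ∧
      ∀ τ : ℝ, IsClosed {x : H | τ ≤ RPD X β x} :=
  rpd_lipschitz_general X β hβ hne
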